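/- arXiv:math/0512025 — 3 statements merged into one kernel-verified Lean document; each statement's English description precedes it below -/
import Mathlib

section
/- Let H be a Hilbert space, Y a locally compact Hausdorff space, and A: Y → B(H) a bounded continuous operator family. If A(y) is Fredholm for all y, invertible outside a compact subset of Y with uniformly bounded inverse, then the image of A in the quotient C*-algebra C_b(Y, B(H)) / C_0(Y, K(H)) is invertible, and conversely. -/
open Filter Topology

/-- A bounded operator on a Hilbert space is Fredholm if it has finite-dimensional
kernel, closed range and finite-dimensional cokernel. -/
def IsFredholmOp {H : Type*} [NormedAddCommGroup H] [InnerProductSpace ℂ H] [CompleteSpace H]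
    (T : H →L[ℂ] H) : Prop :=
  FiniteDimensional ℂ (LinearMap.ker (T : H →ₗ[ℂ] H)) ∧ IsClosed (LinearMap.range (T : H →ₗ[ℂ] H) : Set H) ∧
    FiniteDimensional ℂ (H ⧸ LinearMap.range (T : H →ₗ[ℂ] H))

/-- Membership in the ideal `C₀(Y, K(H))` of compact-operator-valued families
tending to zero in norm at infinity. -/
def MemCzeroK {H : Type*} [NormedAddCommGroup H] [InnerProductSpace ℂ H] [CompleteSpace H]
    {Y : Type*} [TopologicalSpace Y] (D : Y → H →L[ℂ] H) : Prop :=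
  (∀ y, IsCompactOperator ⇑(D y)) ∧ Tendsto (fun y => ‖D y‖) (cocompact Y) (𝓝 0)

/-!
Pointwise, this is Atkinson's theorem: `T` is Fredholm iff it is invertible modulo compact
operators. Fredholm operators are those invertible modulo finite-rank operators, and on a
Hilbert space `1 + K`, for `K` compact, is a unit modulo finite rank (approximate `K` by `P K`
with `P` the projection onto a finite-dimensional subspace).

For the family, let `K` be a compact neighbourhood of the (compact) set where `A y` is not
invertible. Near each point `w`, a parametrix `P_w` of `A w` satisfies
`A y P_w - 1 = (A w P_w - 1) + (A y - A w) P_w`, compact plus small. Gluing the `P_w` with a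
partition of unity on `K`, and `A⁻¹` off `K`, gives a bounded continuous `B` with
`A B - 1 = k + r` and `B A - 1 = k' + r'`, where `k, k' ∈ C₀(Y, K(H))` and `‖r‖, ‖r'‖ ≤ 1/2`.
Neumann series turn `B (1 + r)⁻¹` into a right and `(1 + r')⁻¹ B` into a left inverse modulo
the ideal, and these agree modulo it. Conversely, if `B` inverts `A` modulo the ideal, the
defects are compact, and off a compact set they have norm `≤ 1/2`, so that `A y` is invertible
there with inverse bounded by a Neumann series.
-/

open scoped LinearMap.FiniteRangeSetoid

namespace LinearMap

variable {K V V₂ : Type*} [CommRing K] [AddCommGroup V] [Module K V] [AddCommGroup V₂]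
  [Module K V₂]

theorem isQuasiInverse_of_left_of_right {u : V →ₗ[K] V₂} {l r : V₂ →ₗ[K] V}
    (hl : l ∘ₗ u ≈ LinearMap.id) (hr : u ∘ₗ r ≈ LinearMap.id) : r.IsQuasiInverse u := by
  have hrl : r ≈ l := calc
    r = LinearMap.id ∘ₗ r := rfl
    _ ≈ (l ∘ₗ u) ∘ₗ r := by grw [hl]
    _ = l ∘ₗ (u ∘ₗ r) := rfl
    _ ≈ l ∘ₗ LinearMap.id := by grw [hr]
    _ = l := rfl
  refine ⟨?_, hr⟩
  calc r ∘ₗ u ≈ l ∘ₗ u := by grw [hrl]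
    _ ≈ LinearMap.id := hl

end LinearMap

namespace ContinuousLinearMap

section Normed

variable {𝕜 E F : Type*} [NontriviallyNormedField 𝕜] [NormedAddCommGroup E] [NormedSpace 𝕜 E]
  [NormedAddCommGroup F] [NormedSpace 𝕜 F]

theorem isCompactOperator_of_hasFiniteRange [ProperSpace 𝕜] {f : E →L[𝕜] F}
    (hf : (f : E →ₗ[𝕜] F).HasFiniteRange) : IsCompactOperator f := by
  have : FiniteDimensional 𝕜 (f : E →ₗ[𝕜] F).range := Module.Finite.iff_fg.mpr hf
  have : ProperSpace (f : E →ₗ[𝕜] F).range := FiniteDimensional.proper 𝕜 _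
  exact (isCompactOperator_of_locallyCompactSpace_dom f.rangeRestrict).clm_comp
    (f : E →ₗ[𝕜] F).range.subtypeL

theorem isStrictMap_of_isClosed_range [CompleteSpace E] [CompleteSpace F] {f : E →L[𝕜] F}
    (hf : IsClosed (LinearMap.range (f : E →ₗ[𝕜] F) : Set F)) : IsStrictMap f := by
  have : CompleteSpace (LinearMap.range (f : E →ₗ[𝕜] F)) := hf.completeSpace_coe
  have hsurj := (f : E →ₗ[𝕜] F).surjective_rangeRestrict
  exact (LinearMap.isStrictMap_iff_isOpenQuotientMap_rangeRestrict (f := (f : E →ₗ[𝕜] F))).mpr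
    ⟨hsurj, f.rangeRestrict.continuous, f.rangeRestrict.isOpenMap hsurj⟩

end Normed

section InnerProduct

variable {𝕜 E F : Type*} [RCLike 𝕜] [NormedAddCommGroup E] [InnerProductSpace 𝕜 E]
  [NormedAddCommGroup F] [NormedSpace 𝕜 F]

theorem _root_.IsCompactOperator.exists_norm_sub_starProjection_comp_le {K : F →L[𝕜] E}
    (hK : IsCompactOperator K) {ε : ℝ} (hε : 0 < ε) :
    ∃ (V : Submodule 𝕜 E) (_ : FiniteDimensional 𝕜 V), ‖K - V.starProjection ∘L K‖ ≤ ε := by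
  obtain ⟨t, -, ht, hcover⟩ :=
    (hK.isCompact_closure_image_closedBall (f := (K : F →ₗ[𝕜] E)) 1).finite_cover_balls hε
  have : FiniteDimensional 𝕜 (Submodule.span 𝕜 t) := FiniteDimensional.span_of_finite 𝕜 ht
  refine ⟨Submodule.span 𝕜 t, this, opNorm_le_of_unit_norm hε.le fun x hx => ?_⟩
  have hKx : K x ∈ closure (K '' Metric.closedBall 0 1) :=
    subset_closure ⟨x, by simp [hx], rfl⟩
  obtain ⟨z, hzt, hz⟩ := Set.mem_iUnion₂.mp (hcover hKx)
  calc ‖(K - (Submodule.span 𝕜 t).starProjection ∘L K) x‖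
      = ‖K x - (Submodule.span 𝕜 t).starProjection (K x)‖ := rfl
    _ ≤ ‖K x - z‖ := by
      rw [Submodule.starProjection_minimal]
      exact ciInf_le ⟨0, Set.forall_mem_range.mpr fun _ => norm_nonneg _⟩
        (⟨z, Submodule.subset_span hzt⟩ : Submodule.span 𝕜 t)
    _ ≤ ε := (mem_ball_iff_norm.mp hz).le

variable [CompleteSpace E]

theorem _root_.IsCompactOperator.exists_one_add_equiv_unit {K : E →L[𝕜] E}
    (hK : IsCompactOperator K) :
    ∃ U : (E →L[𝕜] E)ˣ, ((1 + K : E →L[𝕜] E) : E →ₗ[𝕜] E) ≈ (U : E →ₗ[𝕜] E) := by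
  obtain ⟨V, hV, hKV⟩ := hK.exists_norm_sub_starProjection_comp_le (ε := 1 / 2) (by norm_num)
  have hU : IsUnit (1 - (V.starProjection ∘L K - K)) :=
    isUnit_one_sub_of_norm_lt_one (by rw [norm_sub_rev]; linarith)
  refine ⟨hU.unit, ?_⟩
  rw [LinearMap.FiniteRangeSetoid.equiv_iff_hasFiniteRange, IsUnit.unit_spec]
  have : ((1 + K - (1 - (V.starProjection ∘L K - K)) : E →L[𝕜] E) : E →ₗ[𝕜] E) =
      V.subtype ∘ₗ ((V.orthogonalProjectionOnto ∘L K : E →L[𝕜] V) : E →ₗ[𝕜] V) := by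
    ext x; simp
  rw [← ContinuousLinearMap.toLinearMap_sub, this]
  exact LinearMap.HasFiniteRange.of_isNoetherian_rng.comp_left _

end InnerProduct

end ContinuousLinearMap

section Atkinson

open ContinuousLinearMap

variable {H : Type*} [NormedAddCommGroup H] [InnerProductSpace ℂ H] [CompleteSpace H]

theorem isFredholmOp_iff_isFredholm {T : H →L[ℂ] H} : IsFredholmOp T ↔ T.IsFredholm :=
  ⟨fun ⟨hker, hrange, hcoker⟩ => ⟨isStrictMap_of_isClosed_range hrange, hrange, hker, hcoker,
    Submodule.ClosedComplemented.of_finiteDimensional _⟩,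
   fun h => ⟨h.finite_ker, h.isClosed_range, h.finite_coker⟩⟩

theorem isFredholmOp_iff_exists_isCompactOperator {T : H →L[ℂ] H} :
    IsFredholmOp T ↔ ∃ P : H →L[ℂ] H,
      IsCompactOperator ⇑(T ∘L P - 1) ∧ IsCompactOperator ⇑(P ∘L T - 1) := by
  rw [isFredholmOp_iff_isFredholm, isFredholm_iff_exists_isQuasiInverse]
  constructor
  · rintro ⟨P, hPT, hTP⟩
    rw [LinearMap.IsLeftQuasiInverse, LinearMap.FiniteRangeSetoid.equiv_iff_hasFiniteRange] at hPT
    rw [LinearMap.IsRightQuasiInverse, LinearMap.FiniteRangeSetoid.equiv_iff_hasFiniteRange] at hTP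
    exact ⟨P, isCompactOperator_of_hasFiniteRange hTP, isCompactOperator_of_hasFiniteRange hPT⟩
  · rintro ⟨P, hTP, hPT⟩
    obtain ⟨U, hU⟩ := hTP.exists_one_add_equiv_unit
    obtain ⟨W, hW⟩ := hPT.exists_one_add_equiv_unit
    rw [add_sub_cancel] at hU hW
    set u : H →L[ℂ] H := ↑U⁻¹
    set w : H →L[ℂ] H := ↑W⁻¹
    refine ⟨P ∘L u, LinearMap.isQuasiInverse_of_left_of_right (l := w ∘L P) ?_ ?_⟩
    · calc ((w ∘L P : H →L[ℂ] H) : H →ₗ[ℂ] H) ∘ₗ (T : H →ₗ[ℂ] H)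
          = (w : H →ₗ[ℂ] H) ∘ₗ ((P ∘L T : H →L[ℂ] H) : H →ₗ[ℂ] H) := rfl
        _ ≈ (w : H →ₗ[ℂ] H) ∘ₗ ((W : H →L[ℂ] H) : H →ₗ[ℂ] H) := by grw [hW]
        _ = LinearMap.id := congrArg ContinuousLinearMap.toLinearMap W.inv_mul
    · calc (T : H →ₗ[ℂ] H) ∘ₗ ((P ∘L u : H →L[ℂ] H) : H →ₗ[ℂ] H)
          = ((T ∘L P : H →L[ℂ] H) : H →ₗ[ℂ] H) ∘ₗ (u : H →ₗ[ℂ] H) := rfl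
        _ ≈ ((U : H →L[ℂ] H) : H →ₗ[ℂ] H) ∘ₗ (u : H →ₗ[ℂ] H) := by grw [hU]
        _ = LinearMap.id := congrArg ContinuousLinearMap.toLinearMap U.mul_inv

end Atkinson

theorem exists_bound_mul {Y R : Type*} [NonUnitalSeminormedRing R] {f g : Y → R}
    (hf : ∃ M, ∀ y, ‖f y‖ ≤ M) (hg : ∃ M, ∀ y, ‖g y‖ ≤ M) : ∃ M, ∀ y, ‖f y * g y‖ ≤ M := by
  obtain ⟨M, hM⟩ := hf
  obtain ⟨N, hN⟩ := hg
  exact ⟨M * N, fun y => (norm_mul_le _ _).trans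
    (mul_le_mul (hM y) (hN y) (norm_nonneg _) ((norm_nonneg _).trans (hM y)))⟩

section NormedRing

variable {R : Type*} [NormedRing R] [HasSummableGeomSeries R]

theorem norm_ringInverse_le_of_norm_sub_one_le_half {a : R} (ha : ‖a - 1‖ ≤ 1 / 2) :
    ‖Ring.inverse a‖ ≤ ‖(1 : R)‖ + 1 := by
  have ht : ‖1 - a‖ < 1 := by rw [norm_sub_rev]; linarith
  have hinv : (1 - ‖1 - a‖)⁻¹ ≤ 2 := by
    rw [inv_le_comm₀ (by linarith) (by norm_num), norm_sub_rev]; linarith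
  calc ‖Ring.inverse a‖ = ‖∑' n : ℕ, (1 - a) ^ n‖ := by
        rw [geom_series_eq_inverse _ ht, sub_sub_cancel]
    _ ≤ ‖(1 : R)‖ - 1 + (1 - ‖1 - a‖)⁻¹ := tsum_geometric_le_of_norm_lt_one _ ht
    _ ≤ ‖(1 : R)‖ + 1 := by linarith

theorem isUnit_of_norm_sub_one_lt_one {a : R} (ha : ‖a - 1‖ < 1) : IsUnit a := by
  simpa using isUnit_one_sub_of_norm_lt_one (x := 1 - a) (by rwa [norm_sub_rev])

theorem ContinuousAt.ringInverse {Y : Type*} [TopologicalSpace Y] {f : Y → R} {y : Y}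
    (hf : ContinuousAt f y) (hy : IsUnit (f y)) :
    ContinuousAt (fun y => Ring.inverse (f y)) y := by
  obtain ⟨u, hu⟩ := hy
  exact (hu ▸ NormedRing.inverse_continuousAt u).comp hf

theorem exists_inverse_of_norm_mul_sub_one_le_half {a b : R} (hab : ‖a * b - 1‖ ≤ 1 / 2)
    (hba : ‖b * a - 1‖ ≤ 1 / 2) :
    ∃ c, a * c = 1 ∧ c * a = 1 ∧ ‖c‖ ≤ ‖b‖ * (‖(1 : R)‖ + 1) := by
  have hac : a * (b * Ring.inverse (a * b)) = 1 := by
    rw [← mul_assoc, Ring.mul_inverse_cancel _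
      (isUnit_of_norm_sub_one_lt_one (hab.trans_lt one_half_lt_one))]
  have hda : Ring.inverse (b * a) * b * a = 1 := by
    rw [mul_assoc, Ring.inverse_mul_cancel _
      (isUnit_of_norm_sub_one_lt_one (hba.trans_lt one_half_lt_one))]
  have hcd : b * Ring.inverse (a * b) = Ring.inverse (b * a) * b := calc
    _ = Ring.inverse (b * a) * b * a * (b * Ring.inverse (a * b)) := by rw [hda, one_mul]
    _ = Ring.inverse (b * a) * b := by rw [mul_assoc _ a, hac, mul_one]
  exact ⟨_, hac, by rw [hcd, hda], (norm_mul_le _ _).trans (mul_le_mul_of_nonneg_left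
    (norm_ringInverse_le_of_norm_sub_one_le_half hab) (norm_nonneg _))⟩

end NormedRing

section NormedRingFamily

variable {Y R : Type*} [TopologicalSpace Y] [NormedRing R] [HasSummableGeomSeries R]

theorem continuous_smul_ringInverse [Module ℝ R] [ContinuousSMul ℝ R] {φ : Y → ℝ} {f : Y → R}
    (hφ : Continuous φ) (hf : Continuous f) (hunit : ∀ y ∈ tsupport φ, IsUnit (f y)) :
    Continuous fun y => φ y • Ring.inverse (f y) :=
  continuous_of_tsupport fun y hy =>
    hφ.continuousAt.smul
      (hf.continuousAt.ringInverse (hunit y (tsupport_smul_subset_left _ _ hy)))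

theorem exists_bound_ringInverse {f : Y → R} (hf : Continuous f) {F S : Set Y} (hF : IsClosed F)
    (hS : IsCompact S) (hunit : ∀ y ∈ F, IsUnit (f y)) {C : ℝ}
    (hC : ∀ y ∈ F, y ∉ S → ‖Ring.inverse (f y)‖ ≤ C) :
    ∃ C', ∀ y ∈ F, ‖Ring.inverse (f y)‖ ≤ C' := by
  obtain ⟨C₁, hC₁⟩ := (hS.inter_left hF).exists_bound_of_continuousOn fun y hy =>
    (hf.continuousAt.ringInverse (hunit y hy.1)).continuousWithinAt
  refine ⟨max C C₁, fun y hy => ?_⟩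
  by_cases hyS : y ∈ S
  · exact (hC₁ y ⟨hy, hyS⟩).trans (le_max_right _ _)
  · exact (hC y hy hyS).trans (le_max_left _ _)

theorem isCompact_setOf_not_isUnit {f : Y → R} (hf : Continuous f) {S : Set Y}
    (hS : IsCompact S) (hunit : ∀ y ∉ S, IsUnit (f y)) : IsCompact {y | ¬IsUnit (f y)} :=
  hS.of_isClosed_subset (Units.isOpen.preimage hf).isClosed_compl
    fun y hy => by_contra fun hyS => hy (hunit y hyS)

theorem exists_inverse_one_add_of_norm_le_half {r : Y → R} (hr : Continuous r)
    (hsmall : ∀ y, ‖r y‖ ≤ 1 / 2) :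
    ∃ E : Y → R, Continuous E ∧ (∃ M, ∀ y, ‖E y‖ ≤ M) ∧
      ∀ y, (1 + r y) * E y = 1 ∧ E y * (1 + r y) = 1 := by
  have hr' (y : Y) : ‖(1 + r y) - 1‖ ≤ 1 / 2 := by simpa using hsmall y
  have hunit (y : Y) := isUnit_of_norm_sub_one_lt_one ((hr' y).trans_lt one_half_lt_one)
  exact ⟨fun y => Ring.inverse (1 + r y), continuous_iff_continuousAt.mpr fun y =>
      (continuous_const.add hr).continuousAt.ringInverse (hunit y),
    ⟨_, fun y => norm_ringInverse_le_of_norm_sub_one_le_half (hr' y)⟩,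
    fun y => ⟨Ring.mul_inverse_cancel _ (hunit y), Ring.inverse_mul_cancel _ (hunit y)⟩⟩

end NormedRingFamily

section WeightedSums

variable {ι : Type*} (s : Finset ι)

theorem norm_sum_smul_le_of_sum_le_one {E : Type*} [SeminormedAddCommGroup E] [NormedSpace ℝ E]
    {c : ι → ℝ} {x : ι → E} {r : ℝ} (hc : ∀ i ∈ s, 0 ≤ c i) (hsum : ∑ i ∈ s, c i ≤ 1)
    (hr : 0 ≤ r) (hx : ∀ i ∈ s, c i ≠ 0 → ‖x i‖ ≤ r) : ‖∑ i ∈ s, c i • x i‖ ≤ r :=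
  calc ‖∑ i ∈ s, c i • x i‖ ≤ ∑ i ∈ s, c i * r := by
        refine (norm_sum_le _ _).trans (Finset.sum_le_sum fun i hi => ?_)
        rw [norm_smul, Real.norm_of_nonneg (hc i hi)]
        rcases eq_or_ne (c i) 0 with h | h
        · simp [h]
        · exact mul_le_mul_of_nonneg_left (hx i hi h) (hc i hi)
    _ = (∑ i ∈ s, c i) * r := (Finset.sum_mul _ _ _).symm
    _ ≤ r := mul_le_of_le_one_left hr hsum

variable {R : Type*} [Ring R] [Module ℝ R] {c₀ : ℝ} {c : ι → ℝ} {a g : R} (q : ι → R)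

theorem mul_smul_add_sum_smul_sub_one [SMulCommClass ℝ R R] (hsum : c₀ + ∑ i ∈ s, c i = 1)
    (hg : c₀ ≠ 0 → a * g = 1) :
    a * (c₀ • g + ∑ i ∈ s, c i • q i) - 1 = ∑ i ∈ s, c i • (a * q i - 1) := by
  have h₀ : c₀ • (a * g - 1) = 0 := by
    rcases eq_or_ne c₀ 0 with h | h <;> simp [h, hg]
  calc a * (c₀ • g + ∑ i ∈ s, c i • q i) - 1
      = c₀ • (a * g - 1) + ∑ i ∈ s, c i • (a * q i - 1) := by
        simp only [mul_add, Finset.mul_sum, mul_smul_comm, smul_sub, Finset.sum_sub_distrib,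
          ← Finset.sum_smul]
        nth_rw 1 [← one_smul ℝ (1 : R), ← hsum, add_smul]
        abel
    _ = ∑ i ∈ s, c i • (a * q i - 1) := by rw [h₀, zero_add]

theorem smul_add_sum_smul_mul_sub_one [IsScalarTower ℝ R R] (hsum : c₀ + ∑ i ∈ s, c i = 1)
    (hg : c₀ ≠ 0 → g * a = 1) :
    (c₀ • g + ∑ i ∈ s, c i • q i) * a - 1 = ∑ i ∈ s, c i • (q i * a - 1) := by
  have h₀ : c₀ • (g * a - 1) = 0 := by
    rcases eq_or_ne c₀ 0 with h | h <;> simp [h, hg]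
  calc (c₀ • g + ∑ i ∈ s, c i • q i) * a - 1
      = c₀ • (g * a - 1) + ∑ i ∈ s, c i • (q i * a - 1) := by
        simp only [add_mul, Finset.sum_mul, smul_mul_assoc, smul_sub, Finset.sum_sub_distrib,
          ← Finset.sum_smul]
        nth_rw 1 [← one_smul ℝ (1 : R), ← hsum, add_smul]
        abel
    _ = ∑ i ∈ s, c i • (q i * a - 1) := by rw [h₀, zero_add]

end WeightedSums

section Ideal

variable {H : Type*} [NormedAddCommGroup H] [InnerProductSpace ℂ H] [CompleteSpace H]
  {Y : Type*} [TopologicalSpace Y] {D E : Y → H →L[ℂ] H}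

theorem MemCzeroK.add (hD : MemCzeroK D) (hE : MemCzeroK E) : MemCzeroK fun y => D y + E y :=
  ⟨fun y => (hD.1 y).add (hE.1 y), squeeze_zero (fun _ => norm_nonneg _)
    (fun _ => norm_add_le _ _) (by simpa using hD.2.add hE.2)⟩

theorem MemCzeroK.sub (hD : MemCzeroK D) (hE : MemCzeroK E) : MemCzeroK fun y => D y - E y :=
  ⟨fun y => (hD.1 y).sub (hE.1 y), squeeze_zero (fun _ => norm_nonneg _)
    (fun _ => norm_sub_le _ _) (by simpa using hD.2.add hE.2)⟩

theorem MemCzeroK.comp_left (hD : MemCzeroK D) {B : Y → H →L[ℂ] H} (hB : ∃ M, ∀ y, ‖B y‖ ≤ M) :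
    MemCzeroK fun y => B y ∘L D y := by
  obtain ⟨M, hM⟩ := hB
  exact ⟨fun y => (hD.1 y).clm_comp (B y), squeeze_zero (fun _ => norm_nonneg _)
    (fun y => (ContinuousLinearMap.opNorm_comp_le _ _).trans
      (mul_le_mul_of_nonneg_right (hM y) (norm_nonneg _)))
    (by simpa using hD.2.const_mul M)⟩

theorem MemCzeroK.comp_right (hD : MemCzeroK D) {B : Y → H →L[ℂ] H} (hB : ∃ M, ∀ y, ‖B y‖ ≤ M) :
    MemCzeroK fun y => D y ∘L B y := by
  obtain ⟨M, hM⟩ := hB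
  exact ⟨fun y => (hD.1 y).comp_clm (B y), squeeze_zero (fun _ => norm_nonneg _)
    (fun y => (ContinuousLinearMap.opNorm_comp_le _ _).trans
      (mul_le_mul_of_nonneg_left (hM y) (norm_nonneg _)))
    (by simpa using hD.2.mul_const M)⟩

theorem memCzeroK_sum_smul {ι : Type*} (s : Finset ι) {f : ι → Y → ℝ}
    (hf : ∀ i ∈ s, HasCompactSupport (f i)) {K : ι → H →L[ℂ] H}
    (hK : ∀ i ∈ s, IsCompactOperator (K i)) : MemCzeroK fun y => ∑ i ∈ s, f i y • K i := by
  refine ⟨fun y => (compactOperator (RingHom.id ℂ) H H).sum_mem fun i hi =>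
    Submodule.smul_of_tower_mem _ (f i y) (hK i hi), ?_⟩
  rw [← tendsto_zero_iff_norm_tendsto_zero]
  simpa using tendsto_finsetSum s fun i hi => (hf i hi).is_zero_at_infty.smul_const (K i)

theorem memCzeroK_comp_sub_one_of_inverse {A B C : Y → H →L[ℂ] H} (hA : ∃ M, ∀ y, ‖A y‖ ≤ M)
    (hB : ∃ M, ∀ y, ‖B y‖ ≤ M) (hC : ∃ M, ∀ y, ‖C y‖ ≤ M)
    (hAB : MemCzeroK fun y => A y ∘L B y - 1) (hCA : MemCzeroK fun y => C y ∘L A y - 1) :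
    MemCzeroK fun y => B y ∘L A y - 1 := by
  have key : (fun y => B y ∘L A y - 1) = fun y =>
      (C y ∘L (A y ∘L B y - 1) - (C y ∘L A y - 1) ∘L B y) ∘L A y + (C y ∘L A y - 1) := by
    funext y
    simp only [← ContinuousLinearMap.mul_def]
    noncomm_ring
  rw [key]
  exact (((hAB.comp_left hC).sub (hCA.comp_right hB)).comp_right hA).add hCA

end Ideal

theorem exists_partitionOfUnity_dist_lt {Y X : Type*} [TopologicalSpace Y]
    [LocallyCompactSpace Y] [T2Space Y] [PseudoMetricSpace X] {f : Y → X} (hf : Continuous f)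
    {K : Set Y} (hK : IsCompact K) {ε : Y → ℝ} (hε : ∀ y, 0 < ε y) :
    ∃ (t : Finset Y) (ρ : PartitionOfUnity t Y K), (∀ i, HasCompactSupport (ρ i)) ∧
      ∀ i, ∀ y ∈ tsupport (ρ i), dist (f y) (f i) < ε i := by
  set U : Y → Set Y := fun w => {y | dist (f y) (f w) < ε w}
  have hU : ∀ w, IsOpen (U w) := fun w => isOpen_lt (hf.dist continuous_const) continuous_const
  obtain ⟨t, -, hKt⟩ :=
    hK.elim_nhds_subcover U fun w _ => (hU w).mem_nhds (by simpa [U] using hε w)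
  obtain ⟨ρ, hρU, hρc⟩ := PartitionOfUnity.exists_isSubordinate_of_locallyFinite_t2space hK
    (fun i : t => U i) (fun i => hU i) (locallyFinite_of_finite _)
    (by simpa only [Set.iUnion_subtype, Finset.mem_coe] using hKt)
  exact ⟨t, ρ, hρc, fun i y hy => hρU i hy⟩

section Gluing

variable {Y R : Type*} [TopologicalSpace Y] [NormedRing R] [NormedAlgebra ℝ R]
  {ι : Type*} [Fintype ι] {K : Set Y}

-- `Ring.inverse (A y)` is junk where `A y` is not a unit; its weight `1 - ∑ i, ρ i y` vanishes
-- on `K`, which will contain all such `y`.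
noncomputable def gluedParametrix (A : Y → R) (ρ : PartitionOfUnity ι Y K) (P : ι → R) :
    Y → R :=
  fun y => (1 - ∑ i, ρ i y) • Ring.inverse (A y) + ∑ i, ρ i y • P i

variable {A : Y → R} {ρ : PartitionOfUnity ι Y K} {P : ι → R}

theorem PartitionOfUnity.sum_univ_le_one (y : Y) : ∑ i, ρ i y ≤ 1 := by
  simpa [finsum_eq_sum_of_fintype] using ρ.sum_le_one y

theorem PartitionOfUnity.tsupport_one_sub_sum_subset :
    tsupport (fun y => 1 - ∑ i, ρ i y) ⊆ (interior K)ᶜ := by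
  rw [← closure_compl]
  refine closure_mono fun y hy hyK => hy ?_
  simp [← finsum_eq_sum_of_fintype, ρ.sum_eq_one hyK]

theorem continuous_gluedParametrix [HasSummableGeomSeries R] (hA : Continuous A)
    (hunit : ∀ y ∉ interior K, IsUnit (A y)) : Continuous (gluedParametrix A ρ P) :=
  (continuous_smul_ringInverse (continuous_const.sub (continuous_finsetSum _ fun i _ =>
      (ρ i).continuous)) hA fun y hy => hunit y (ρ.tsupport_one_sub_sum_subset hy)).add
    (continuous_finsetSum _ fun i _ => (ρ i).continuous.smul continuous_const)

theorem exists_bound_gluedParametrix {C : ℝ}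
    (hC : ∀ y ∉ interior K, ‖Ring.inverse (A y)‖ ≤ C) :
    ∃ M, ∀ y, ‖gluedParametrix A ρ P y‖ ≤ M := by
  refine ⟨max C 0 + ∑ i, ‖P i‖, fun y => (norm_add_le _ _).trans (add_le_add ?_ ?_)⟩
  · rcases eq_or_ne (1 - ∑ i, ρ i y) 0 with h | h
    · simp [h]
    rw [norm_smul, Real.norm_of_nonneg (sub_nonneg.mpr (ρ.sum_univ_le_one y))]
    refine (mul_le_of_le_one_left (norm_nonneg _) ?_).trans ((hC y ?_).trans (le_max_left _ _))
    · linarith [Finset.sum_nonneg fun i (_ : i ∈ Finset.univ) => ρ.nonneg i y]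
    · exact ρ.tsupport_one_sub_sum_subset (subset_tsupport _ h)
  · exact norm_sum_smul_le_of_sum_le_one _ (fun i _ => ρ.nonneg i y) (ρ.sum_univ_le_one y)
      (by positivity) fun i _ _ => Finset.single_le_sum (fun j _ => norm_nonneg (P j))
        (Finset.mem_univ i)

theorem norm_mul_gluedParametrix_sub_one_sub_le (hunit : ∀ y ∉ interior K, IsUnit (A y))
    (w : ι → Y) (hsmall : ∀ i y, ρ i y ≠ 0 → ‖A y - A (w i)‖ * ‖P i‖ ≤ 1 / 2) (y : Y) :
    ‖A y * gluedParametrix A ρ P y - 1 - ∑ i, ρ i y • (A (w i) * P i - 1)‖ ≤ 1 / 2 := by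
  have hg (h : 1 - ∑ i, ρ i y ≠ 0) : A y * Ring.inverse (A y) = 1 :=
    Ring.mul_inverse_cancel _ (hunit y (ρ.tsupport_one_sub_sum_subset (subset_tsupport _ h)))
  rw [gluedParametrix, mul_smul_add_sum_smul_sub_one _ _ (sub_add_cancel _ _) hg,
    ← Finset.sum_sub_distrib]
  simp_rw [← smul_sub, sub_sub_sub_cancel_right, ← sub_mul]
  exact norm_sum_smul_le_of_sum_le_one _ (fun i _ => ρ.nonneg i y) (ρ.sum_univ_le_one y)
    (by norm_num) fun i _ hi => (norm_mul_le _ _).trans (hsmall i y hi)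

theorem norm_gluedParametrix_mul_sub_one_sub_le (hunit : ∀ y ∉ interior K, IsUnit (A y))
    (w : ι → Y) (hsmall : ∀ i y, ρ i y ≠ 0 → ‖A y - A (w i)‖ * ‖P i‖ ≤ 1 / 2) (y : Y) :
    ‖gluedParametrix A ρ P y * A y - 1 - ∑ i, ρ i y • (P i * A (w i) - 1)‖ ≤ 1 / 2 := by
  have hg (h : 1 - ∑ i, ρ i y ≠ 0) : Ring.inverse (A y) * A y = 1 :=
    Ring.inverse_mul_cancel _ (hunit y (ρ.tsupport_one_sub_sum_subset (subset_tsupport _ h)))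
  rw [gluedParametrix, smul_add_sum_smul_mul_sub_one _ _ (sub_add_cancel _ _) hg,
    ← Finset.sum_sub_distrib]
  simp_rw [← smul_sub, sub_sub_sub_cancel_right, ← mul_sub]
  exact norm_sum_smul_le_of_sum_le_one _ (fun i _ => ρ.nonneg i y) (ρ.sum_univ_le_one y)
    (by norm_num) fun i _ hi =>
      (norm_mul_le _ _).trans ((mul_comm _ _).trans_le (hsmall i y hi))

end Gluing

section Families

variable {H : Type*} [NormedAddCommGroup H] [InnerProductSpace ℂ H] [CompleteSpace H]
  {Y : Type*} [TopologicalSpace Y] {A B k : Y → H →L[ℂ] H}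

theorem exists_right_inverse_mod_czeroK (hA : Continuous A) (hB : Continuous B)
    (hBb : ∃ M, ∀ y, ‖B y‖ ≤ M) (hk : Continuous k) (hkJ : MemCzeroK k)
    (hsmall : ∀ y, ‖A y * B y - 1 - k y‖ ≤ 1 / 2) :
    ∃ B' : Y → H →L[ℂ] H, Continuous B' ∧ (∃ M, ∀ y, ‖B' y‖ ≤ M) ∧
      MemCzeroK fun y => A y ∘L B' y - 1 := by
  obtain ⟨E, hE, hEb, hEinv⟩ := exists_inverse_one_add_of_norm_le_half
    (r := fun y => A y * B y - 1 - k y) (((hA.mul hB).sub continuous_const).sub hk) hsmall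
  have hdefect : (fun y => A y ∘L (B y * E y) - 1) = fun y => k y ∘L E y := by
    funext y
    have hAB : A y * B y = (1 + (A y * B y - 1 - k y)) + k y := by abel
    change A y * (B y * E y) - 1 = k y * E y
    rw [← mul_assoc, hAB, add_mul, (hEinv y).1]
    abel
  refine ⟨fun y => B y * E y, hB.mul hE, exists_bound_mul hBb hEb, ?_⟩
  rw [hdefect]
  exact hkJ.comp_right hEb

theorem exists_left_inverse_mod_czeroK (hA : Continuous A) (hB : Continuous B)
    (hBb : ∃ M, ∀ y, ‖B y‖ ≤ M) (hk : Continuous k) (hkJ : MemCzeroK k)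
    (hsmall : ∀ y, ‖B y * A y - 1 - k y‖ ≤ 1 / 2) :
    ∃ B' : Y → H →L[ℂ] H, Continuous B' ∧ (∃ M, ∀ y, ‖B' y‖ ≤ M) ∧
      MemCzeroK fun y => B' y ∘L A y - 1 := by
  obtain ⟨E, hE, hEb, hEinv⟩ := exists_inverse_one_add_of_norm_le_half
    (r := fun y => B y * A y - 1 - k y) (((hB.mul hA).sub continuous_const).sub hk) hsmall
  have hdefect : (fun y => (E y * B y) ∘L A y - 1) = fun y => E y ∘L k y := by
    funext y
    have hBA : B y * A y = (1 + (B y * A y - 1 - k y)) + k y := by abel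
    change E y * B y * A y - 1 = E y * k y
    rw [mul_assoc, hBA, mul_add, (hEinv y).2]
    abel
  refine ⟨fun y => E y * B y, hE.mul hB, exists_bound_mul hEb hBb, ?_⟩
  rw [hdefect]
  exact hkJ.comp_left hEb

theorem isFredholmOp_of_inverse_mod_czeroK (hBb : ∃ M, ∀ y, ‖B y‖ ≤ M)
    (hAB : MemCzeroK fun y => A y ∘L B y - 1) (hBA : MemCzeroK fun y => B y ∘L A y - 1) :
    (∀ y, IsFredholmOp (A y)) ∧ ∃ S : Set Y, IsCompact S ∧ ∃ C : ℝ, ∀ y ∉ S,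
      ∃ B' : H →L[ℂ] H, A y ∘L B' = 1 ∧ B' ∘L A y = 1 ∧ ‖B'‖ ≤ C := by
  refine ⟨fun y => isFredholmOp_iff_exists_isCompactOperator.mpr ⟨B y, hAB.1 y, hBA.1 y⟩, ?_⟩
  obtain ⟨M, hM⟩ := hBb
  have hsmall : ∀ᶠ y in cocompact Y, ‖A y * B y - 1‖ ≤ 1 / 2 ∧ ‖B y * A y - 1‖ ≤ 1 / 2 :=
    (hAB.2.eventually (ge_mem_nhds (by norm_num))).and
      (hBA.2.eventually (ge_mem_nhds (by norm_num)))
  obtain ⟨S, hS, hSsmall⟩ := hasBasis_cocompact.eventually_iff.mp hsmall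
  refine ⟨S, hS, M * (‖(1 : H →L[ℂ] H)‖ + 1), fun y hy => ?_⟩
  obtain ⟨c, hAc, hcA, hc⟩ :=
    exists_inverse_of_norm_mul_sub_one_le_half (hSsmall hy).1 (hSsmall hy).2
  exact ⟨c, hAc, hcA, hc.trans (mul_le_mul_of_nonneg_right (hM y) (by positivity))⟩

variable [LocallyCompactSpace Y] [T2Space Y]

theorem exists_inverse_mod_czeroK_up_to_half (hA : Continuous A)
    (hFred : ∀ y, IsFredholmOp (A y)) {K : Set Y} (hK : IsCompact K)
    (hunit : ∀ y ∉ interior K, IsUnit (A y)) {C : ℝ}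
    (hC : ∀ y ∉ interior K, ‖Ring.inverse (A y)‖ ≤ C) :
    ∃ B k k' : Y → H →L[ℂ] H, Continuous B ∧ (∃ M, ∀ y, ‖B y‖ ≤ M) ∧ Continuous k ∧
      Continuous k' ∧ MemCzeroK k ∧ MemCzeroK k' ∧ (∀ y, ‖A y * B y - 1 - k y‖ ≤ 1 / 2) ∧
      ∀ y, ‖B y * A y - 1 - k' y‖ ≤ 1 / 2 := by
  choose P hP using fun w => isFredholmOp_iff_exists_isCompactOperator.mp (hFred w)
  obtain ⟨t, ρ, hρc, hρA⟩ := exists_partitionOfUnity_dist_lt hA hK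
    (ε := fun w => (2 * ‖P w‖ + 1)⁻¹) fun _ => by positivity
  have hsmall (i : t) (y : Y) (hy : ρ i y ≠ 0) : ‖A y - A i‖ * ‖P i‖ ≤ 1 / 2 := calc
    _ ≤ (2 * ‖P i‖ + 1)⁻¹ * ‖P i‖ := mul_le_mul_of_nonneg_right
      (by simpa [dist_eq_norm] using (hρA i y (subset_tsupport _ hy)).le) (norm_nonneg _)
    _ ≤ 1 / 2 := by rw [inv_mul_le_iff₀ (by positivity)]; linarith [norm_nonneg (P i)]
  have hkcont (Q : t → H →L[ℂ] H) : Continuous fun y => ∑ i : t, ρ i y • Q i :=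
    continuous_finsetSum _ fun i _ => (ρ i).continuous.smul continuous_const
  exact ⟨gluedParametrix A ρ fun i => P i, fun y => ∑ i : t, ρ i y • (A i * P i - 1),
    fun y => ∑ i : t, ρ i y • (P i * A i - 1), continuous_gluedParametrix hA hunit,
    exists_bound_gluedParametrix hC, hkcont _, hkcont _,
    memCzeroK_sum_smul _ (fun i _ => hρc i) fun i _ => (hP i).1,
    memCzeroK_sum_smul _ (fun i _ => hρc i) fun i _ => (hP i).2,
    norm_mul_gluedParametrix_sub_one_sub_le hunit Subtype.val hsmall,
    norm_gluedParametrix_mul_sub_one_sub_le hunit Subtype.val hsmall⟩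

theorem exists_inverse_mod_czeroK_of_isFredholmOp (hA : Continuous A)
    (hAb : ∃ M, ∀ y, ‖A y‖ ≤ M) (hFred : ∀ y, IsFredholmOp (A y)) {S : Set Y}
    (hS : IsCompact S) {C : ℝ}
    (hinv : ∀ y ∉ S, ∃ B : H →L[ℂ] H, A y ∘L B = 1 ∧ B ∘L A y = 1 ∧ ‖B‖ ≤ C) :
    ∃ B : Y → H →L[ℂ] H, Continuous B ∧ (∃ M, ∀ y, ‖B y‖ ≤ M) ∧
      MemCzeroK (fun y => A y ∘L B y - 1) ∧ MemCzeroK (fun y => B y ∘L A y - 1) := by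
  have hinv' (y : Y) (hy : y ∉ S) : IsUnit (A y) ∧ ‖Ring.inverse (A y)‖ ≤ C := by
    obtain ⟨B, hAB, hBA, hB⟩ := hinv y hy
    let u : (H →L[ℂ] H)ˣ := ⟨A y, B, hAB, hBA⟩
    exact ⟨u.isUnit, by rwa [show A y = u from rfl, Ring.inverse_unit]⟩
  obtain ⟨K, hK, hNK⟩ := exists_compact_superset
    (isCompact_setOf_not_isUnit hA hS fun y hy => (hinv' y hy).1)
  have hunit (y : Y) (hy : y ∉ interior K) : IsUnit (A y) := by_contra fun h => hy (hNK h)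
  obtain ⟨C', hC'⟩ := exists_bound_ringInverse hA isOpen_interior.isClosed_compl hS hunit
    fun y _ hyS => (hinv' y hyS).2
  obtain ⟨B, k, k', hB, hBb, hk, hk', hkJ, hk'J, hR, hL⟩ :=
    exists_inverse_mod_czeroK_up_to_half hA hFred hK hunit hC'
  obtain ⟨BR, hBR, hBRb, hRJ⟩ := exists_right_inverse_mod_czeroK hA hB hBb hk hkJ hR
  obtain ⟨BL, -, hBLb, hLJ⟩ := exists_left_inverse_mod_czeroK hA hB hBb hk' hk'J hL
  exact ⟨BR, hBR, hBRb, hRJ, memCzeroK_comp_sub_one_of_inverse hAb hBRb hBLb hRJ hLJ⟩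

end Families

/-- A bounded continuous operator family `A : Y → B(H)` is Fredholm for
every `y`, invertible outside a compact subset of `Y` with uniformly bounded inverse,
if and only if its image in the quotient `C_b(Y, B(H)) / C₀(Y, K(H))` is invertible,
i.e. there is a bounded continuous family `B` inverting `A` modulo `C₀(Y, K(H))`. -/
theorem fredholm_with_parameter_iff_invertible_mod_ideal
    {H : Type*} [NormedAddCommGroup H] [InnerProductSpace ℂ H] [CompleteSpace H]
    {Y : Type*} [TopologicalSpace Y] [LocallyCompactSpace Y] [T2Space Y]
    (A : Y → H →L[ℂ] H) (hAcont : Continuous A) (hAbdd : ∃ M, ∀ y, ‖A y‖ ≤ M) :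
    ((∀ y, IsFredholmOp (A y)) ∧
      ∃ S : Set Y, IsCompact S ∧ ∃ C : ℝ, ∀ y ∉ S, ∃ B : H →L[ℂ] H,
        (A y) ∘L B = 1 ∧ B ∘L (A y) = 1 ∧ ‖B‖ ≤ C) ↔
    (∃ B : Y → H →L[ℂ] H, Continuous B ∧ (∃ M, ∀ y, ‖B y‖ ≤ M) ∧
      MemCzeroK (fun y => (A y) ∘L (B y) - 1) ∧
      MemCzeroK (fun y => (B y) ∘L (A y) - 1)) :=
  ⟨fun ⟨hFred, _, hS, _, hinv⟩ =>
    exists_inverse_mod_czeroK_of_isFredholmOp hAcont hAbdd hFred hS hinv,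
   fun ⟨_, _, hBb, hAB, hBA⟩ => isFredholmOp_of_inverse_mod_czeroK hBb hAB hBA⟩
end

section
/- Let X be a compact Hausdorff space acting faithfully on a Hilbert space H via a unital *-representation of C(X) in B(H), with C(X) ∩ K(H) = {0}, and assume for each x ∈ X the net of functions φ ∈ C(X) with 0 ≤ φ ≤ 1 and φ = 1 near x (ordered by φ ≺ ψ iff φψ = ψ) converges strongly to 0 in B(H). Let A be the C*-algebra of bounded operators that commute with every φ ∈ C(X) modulo compacts, and J_x the closed ideal in A generated by functions vanishing at x. Then an operator A ∈ A is compact if and only if its image in A/J_x is zero for every x ∈ X. -/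
open Filter Topology

section Localization

variable {X : Type*} [TopologicalSpace X] [CompactSpace X] [T2Space X]
variable {H : Type*} [NormedAddCommGroup H] [InnerProductSpace ℂ H] [CompleteSpace H]

/-- The complexification of a real-valued continuous function. -/
def toCC {X : Type*} [TopologicalSpace X] (φ : C(X, ℝ)) : C(X, ℂ) :=
  ⟨fun x => (φ x : ℂ), Complex.continuous_ofReal.comp φ.continuous⟩

/-- The localizing class `F_x` at a point `x`: continuous functions with values in `[0,1]`
equal to `1` in a neighborhood of `x`. -/
def locClass (x : X) : Set C(X, ℝ) :=
  {φ | (∀ y, φ y ∈ Set.Icc (0:ℝ) 1) ∧ ∃ U ∈ 𝓝 x, ∀ y ∈ U, φ y = 1}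

variable (π : C(X, ℂ) →⋆ₐ[ℂ] (H →L[ℂ] H))

/-- The C*-algebra `𝒜` of local operators: bounded operators commuting with the
action of every `φ ∈ C(X)` modulo compact operators. -/
def localOps : Set (H →L[ℂ] H) :=
  {T | ∀ φ : C(X, ℂ), IsCompactOperator ⇑(T ∘L π φ - π φ ∘L T)}

/-- The closed two-sided ideal `J_x` of `𝒜` generated by the functions vanishing at `x`. -/
def Jloc (x : X) : Set (H →L[ℂ] H) :=
  closure {T | ∃ (n : ℕ) (A B : Fin n → H →L[ℂ] H) (φ : Fin n → C(X, ℂ)),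
    (∀ i, A i ∈ localOps π) ∧ (∀ i, B i ∈ localOps π) ∧ (∀ i, φ i x = 0) ∧
    T = ∑ i, (A i) ∘L (π (φ i)) ∘L (B i)}

/-- The representation of `C(X)` is faithful and meets the compact operators trivially. -/
def FaithfulNoCompact : Prop :=
  Function.Injective π ∧ ∀ φ : C(X, ℂ), IsCompactOperator ⇑(π φ) → φ = 0

/-- Each localizing class `F_x`, directed by `φ ≺ ψ ↔ φψ = ψ`, converges strongly to `0`. -/
def LocStrongConv : Prop :=
  ∀ (x : X) (v : H) (ε : ℝ), 0 < ε →
    ∃ φ ∈ locClass x, ∀ ψ ∈ locClass x, φ * ψ = ψ → ‖π (toCC ψ) v‖ < ε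

end Localization

/-! If `T` is compact, the strong convergence of `F_x` to `0` becomes norm convergence of
`π ψ ∘ T` on the image of the unit ball, so `T` is a norm limit of `π (1 - ψ) ∘ T ∈ J_x`.

Conversely, if `T ∈ J_x` then `T` is close to some `∑ Aᵢ π φᵢ Bᵢ` with `φᵢ x = 0`. Cutting the
`φᵢ` off outside a small neighbourhood `U` of `x` does not change `π σ (∑ Aᵢ π φᵢ Bᵢ) π σ` modulo
compacts when `σ` is supported in `U`, because the `Aᵢ` commute with `π σ` modulo compacts; hence
`π σ T π σ ≡ π σ E π σ` with `‖E‖ ≤ ε`. A partition of unity `∑ σⱼ² = 1` subordinate to finitely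
many such neighbourhoods gives `T ≡ ∑ π σⱼ Eⱼ π σⱼ` modulo compacts, and this sum has norm `≤ ε`
since `u ↦ (π σⱼ u)ⱼ` is an isometry. So `T` is a norm limit of compact operators. -/

open scoped InnerProductSpace

section Operators

variable {𝕜 : Type*} [RCLike 𝕜]

theorem ContinuousLinearMap.norm_comp_le_of_subset_iUnion_ball
    {E F G : Type*} [NormedAddCommGroup E] [NormedSpace 𝕜 E] [NormedAddCommGroup F]
    [NormedSpace 𝕜 F] [NormedAddCommGroup G] [NormedSpace 𝕜 G]
    (P : F →L[𝕜] G) (T : E →L[𝕜] F) {δ : ℝ} (hδ : 0 ≤ δ) {t : Set F}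
    (hcover : T '' Metric.closedBall 0 1 ⊆ ⋃ w ∈ t, Metric.ball w δ)
    (hsmall : ∀ w ∈ t, ‖P w‖ ≤ δ) : ‖P ∘L T‖ ≤ ‖P‖ * δ + δ := by
  refine ContinuousLinearMap.opNorm_le_of_unit_norm (by positivity) fun u hu => ?_
  obtain ⟨w, hw, hTw⟩ := Set.mem_iUnion₂.mp
    (hcover ⟨u, mem_closedBall_zero_iff.mpr hu.le, rfl⟩)
  calc ‖P (T u)‖ = ‖P (T u - w) + P w‖ := by rw [← map_add, sub_add_cancel]
    _ ≤ ‖P‖ * ‖T u - w‖ + ‖P w‖ := (norm_add_le _ _).trans (by gcongr; exact P.le_opNorm _)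
    _ ≤ ‖P‖ * δ + δ := by
      gcongr
      · exact (mem_ball_iff_norm.mp hTw).le
      · exact hsmall w hw

variable {H : Type*} [NormedAddCommGroup H] [InnerProductSpace 𝕜 H]
variable {ι : Type*} [Fintype ι] {P : ι → H →L[𝕜] H}

theorem sum_norm_apply_sq_eq (hP : ∀ j, (P j : H →ₗ[𝕜] H).IsSymmetric) (hsum : ∑ j, P j * P j = 1)
    (u : H) : ∑ j, ‖P j u‖ ^ 2 = ‖u‖ ^ 2 := by
  have key : ∀ j, ‖P j u‖ ^ 2 = RCLike.re ⟪u, (P j * P j) u⟫_𝕜 := fun j => by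
    rw [← inner_self_eq_norm_sq (𝕜 := 𝕜)]; exact congrArg RCLike.re (hP j u (P j u))
  simp_rw [key, ← map_sum, ← inner_sum, ← sum_apply, hsum, one_apply_eq_self,
    inner_self_eq_norm_sq]

theorem sum_norm_apply_mul_norm_apply_le (hP : ∀ j, (P j : H →ₗ[𝕜] H).IsSymmetric)
    (hsum : ∑ j, P j * P j = 1) (u w : H) : ∑ j, ‖P j u‖ * ‖P j w‖ ≤ ‖u‖ * ‖w‖ := by
  calc ∑ j, ‖P j u‖ * ‖P j w‖
      ≤ √(∑ j, ‖P j u‖ ^ 2) * √(∑ j, ‖P j w‖ ^ 2) := Real.sum_mul_le_sqrt_mul_sqrt _ _ _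
    _ = ‖u‖ * ‖w‖ := by
      rw [sum_norm_apply_sq_eq hP hsum, sum_norm_apply_sq_eq hP hsum,
        Real.sqrt_sq (norm_nonneg _), Real.sqrt_sq (norm_nonneg _)]

theorem norm_sum_mul_mul_le (hP : ∀ j, (P j : H →ₗ[𝕜] H).IsSymmetric) (hsum : ∑ j, P j * P j = 1)
    {E : ι → H →L[𝕜] H} {c : ℝ} (hc : 0 ≤ c) (hE : ∀ j, ‖E j‖ ≤ c) :
    ‖∑ j, P j * E j * P j‖ ≤ c := by
  set Z := ∑ j, P j * E j * P j
  refine Z.opNorm_le_bound hc fun v => ?_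
  have hinner (w : H) : ⟪Z v, w⟫_𝕜 = ∑ j, ⟪E j (P j v), P j w⟫_𝕜 := by
    simp only [Z, sum_apply, mul_apply_eq_comp, sum_inner]
    exact Finset.sum_congr rfl fun j _ => hP j _ _
  have hsq : ‖Z v‖ ^ 2 ≤ c * ‖v‖ * ‖Z v‖ :=
    calc ‖Z v‖ ^ 2 = RCLike.re ⟪Z v, Z v⟫_𝕜 := (inner_self_eq_norm_sq _).symm
      _ = ∑ j, RCLike.re ⟪E j (P j v), P j (Z v)⟫_𝕜 := by
        rw [hinner, map_sum]
      _ ≤ ∑ j, c * (‖P j v‖ * ‖P j (Z v)‖) := by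
        gcongr with j
        calc RCLike.re ⟪E j (P j v), P j (Z v)⟫_𝕜 ≤ ‖E j (P j v)‖ * ‖P j (Z v)‖ :=
              (RCLike.re_le_norm _).trans (norm_inner_le_norm _ _)
          _ ≤ c * (‖P j v‖ * ‖P j (Z v)‖) := by
              rw [← mul_assoc]; gcongr; exact (E j).le_of_opNorm_le (hE j) _
      _ ≤ c * ‖v‖ * ‖Z v‖ := by
        rw [← Finset.mul_sum, mul_assoc]
        gcongr
        exact sum_norm_apply_mul_norm_apply_le hP hsum v (Z v)
  rcases (norm_nonneg (Z v)).eq_or_lt' with h0 | h0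
  · rw [h0]; positivity
  · nlinarith

end Operators

theorem sandwich_sub_eq_commutator_mul {R : Type*} [Ring R] {a c d : R} (h : a * (c - d) = 0)
    (b e : R) :
    a * (b * (c * e)) * a - a * (b * (d * e)) * a = (a * b - b * a) * ((c - d) * (e * a)) := by
  calc a * (b * (c * e)) * a - a * (b * (d * e)) * a
      = (a * b - b * a) * ((c - d) * (e * a)) + b * (a * (c - d)) * (e * a) := by noncomm_ring
    _ = (a * b - b * a) * ((c - d) * (e * a)) := by rw [h, mul_zero, zero_mul, add_zero]

section Topology

variable {X : Type*} [TopologicalSpace X]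

theorem exists_sq_partition [NormalSpace X] {ι : Type*} [Fintype ι] {U : ι → Set X}
    (hUo : ∀ i, IsOpen (U i)) (hU : Set.univ ⊆ ⋃ i, U i) :
    ∃ σ : ι → C(X, ℝ), (∀ i, tsupport (σ i) ⊆ U i) ∧ ∀ y, ∑ i, σ i y ^ 2 = 1 := by
  obtain ⟨p, hp⟩ := PartitionOfUnity.exists_isSubordinate_of_locallyFinite isClosed_univ U hUo
    (locallyFinite_of_finite U) hU
  refine ⟨fun i => ⟨fun y => √(p i y), (p i).continuous.sqrt⟩, fun i => ?_, fun y => ?_⟩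
  · refine (closure_mono fun y hy => ?_).trans (hp i)
    simpa [Real.sqrt_eq_zero (p.nonneg _ _)] using hy
  · simp only [ContinuousMap.coe_mk, Real.sq_sqrt (p.nonneg _ _)]
    rw [← finsum_eq_sum_of_fintype]
    exact p.sum_eq_one (Set.mem_univ y)

theorem exists_mem_locClass_forall_mul_eq [NormalSpace X] [RegularSpace X] {x : X}
    {s : Set C(X, ℝ)} (hs : s.Finite) (hsx : s ⊆ locClass x) :
    ∃ ψ ∈ locClass x, ∀ φ ∈ s, φ * ψ = ψ := by
  set W := ⋂ φ ∈ s, φ ⁻¹' {1}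
  have hW : W ∈ 𝓝 x := (Filter.biInter_mem hs).mpr fun φ hφ => by
    obtain ⟨-, V, hV, hV1⟩ := hsx hφ
    exact Filter.mem_of_superset hV hV1
  obtain ⟨K, hK, hKc, hKW⟩ := exists_mem_nhds_isClosed_subset (interior_mem_nhds.mpr hW)
  obtain ⟨ψ, hψ0, hψ1, hψ01⟩ := exists_continuous_zero_one_of_isClosed
    isOpen_interior.isClosed_compl hKc (Set.disjoint_compl_left_iff_subset.mpr hKW)
  refine ⟨ψ, ⟨hψ01, K, hK, fun y hy => hψ1 hy⟩, fun φ hφ => ?_⟩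
  ext y
  by_cases hy : y ∈ interior W
  · have : φ y = 1 := Set.mem_iInter₂.mp (interior_subset hy) φ hφ
    simp [this]
  · simp [hψ0 hy]

end Topology

section Localization

variable {X : Type*} [TopologicalSpace X]
variable {H : Type*} [NormedAddCommGroup H] [InnerProductSpace ℂ H] [CompleteSpace H]
variable (π : C(X, ℂ) →⋆ₐ[ℂ] (H →L[ℂ] H))

local notation "𝒦" => compactOperator (RingHom.id ℂ) H H

theorem tsupport_toCC (φ : C(X, ℝ)) : tsupport (toCC φ) = tsupport φ := by
  simp [tsupport, Function.support, toCC]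

theorem isSelfAdjoint_toCC (φ : C(X, ℝ)) : IsSelfAdjoint (toCC φ) := by
  ext y
  simp [toCC]

theorem locClass_apply_self {x : X} {ψ : C(X, ℝ)} (hψ : ψ ∈ locClass x) : ψ x = 1 :=
  hψ.2.elim fun _ hU => hU.2 x (mem_of_mem_nhds hU.1)

theorem sum_map_toCC_mul_self_eq_one {ι : Type*} [Fintype ι] {σ : ι → C(X, ℝ)}
    (hσ : ∀ y, ∑ i, σ i y ^ 2 = 1) : ∑ i, π (toCC (σ i)) * π (toCC (σ i)) = 1 := by
  have : ∑ i, toCC (σ i) * toCC (σ i) = 1 := by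
    ext y
    simp only [ContinuousMap.coe_sum, Finset.sum_apply, ContinuousMap.mul_apply, toCC,
      ContinuousMap.coe_mk, ContinuousMap.one_apply]
    exact_mod_cast (Finset.sum_congr rfl fun i _ => (sq (σ i y))).symm.trans (hσ y)
  simp_rw [← map_mul, ← map_sum, this, map_one]

theorem one_mem_localOps : (1 : H →L[ℂ] H) ∈ localOps π := fun φ => by
  change (1 : H →L[ℂ] H) * π φ - π φ * 1 ∈ 𝒦
  rw [one_mul, mul_one, sub_self]
  exact zero_mem _

theorem commutator_mem_compactOperator {A : H →L[ℂ] H} (hA : A ∈ localOps π) (φ : C(X, ℂ)) :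
    π φ * A - A * π φ ∈ 𝒦 := by
  rw [← neg_sub]
  exact Submodule.neg_mem _ (hA φ)

theorem comp_comp_mem_Jloc {A B : H →L[ℂ] H} (hA : A ∈ localOps π) (hB : B ∈ localOps π)
    {x : X} {φ : C(X, ℂ)} (hφ : φ x = 0) : A ∘L π φ ∘L B ∈ Jloc π x :=
  subset_closure ⟨1, fun _ => A, fun _ => B, fun _ => φ, fun _ => hA, fun _ => hB, fun _ => hφ,
    by simp⟩

theorem sandwich_sub_mem_compactOperator {A : H →L[ℂ] H} (hA : A ∈ localOps π)
    (B : H →L[ℂ] H) {σ f g : C(X, ℂ)} (hfg : σ * f = σ * g) :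
    π σ * (A * (π f * B)) * π σ - π σ * (A * (π g * B)) * π σ ∈ 𝒦 := by
  rw [sandwich_sub_eq_commutator_mul (by rw [mul_sub, ← map_mul, ← map_mul, hfg, sub_self])]
  exact (commutator_mem_compactOperator π hA σ).comp_clm _

section Compact

variable [CompactSpace X]

theorem norm_toCC_mul_le {θ : C(X, ℝ)} (hθ : ∀ y, θ y ∈ Set.Icc (0 : ℝ) 1) {U : Set X}
    (hθU : ∀ y ∉ U, θ y = 0) {f : C(X, ℂ)} {δ : ℝ} (hδ : 0 ≤ δ) (hfU : ∀ y ∈ U, ‖f y‖ ≤ δ) :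
    ‖toCC θ * f‖ ≤ δ := by
  refine (ContinuousMap.norm_le _ hδ).mpr fun y => ?_
  by_cases hy : y ∈ U
  · calc ‖(toCC θ * f) y‖ = |θ y| * ‖f y‖ := by simp [toCC]
      _ ≤ 1 * δ := by
        gcongr
        · exact abs_le.mpr ⟨by linarith [(hθ y).1], (hθ y).2⟩
        · exact hfU y hy
      _ = δ := one_mul δ
  · simpa [toCC, hθU y hy] using hδ

theorem norm_map_toCC_le_one {ψ : C(X, ℝ)} (hψ : ∀ y, ψ y ∈ Set.Icc (0 : ℝ) 1) :
    ‖π (toCC ψ)‖ ≤ 1 := by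
  refine (NonUnitalStarAlgHom.norm_apply_le π _).trans ?_
  simpa using norm_toCC_mul_le (U := Set.univ) (f := 1) hψ (by simp) zero_le_one (by simp)

theorem exists_mem_locClass_norm_comp_le [T2Space X] (hconv : LocStrongConv π)
    {T : H →L[ℂ] H} (hT : IsCompactOperator T) (x : X) {ε : ℝ} (hε : 0 < ε) :
    ∃ ψ ∈ locClass x, ‖π (toCC ψ) ∘L T‖ ≤ ε := by
  obtain ⟨t, -, ht, hcover⟩ := exists_finite_cover_balls_of_isCompact_closure
    (hT.isCompact_closure_image_closedBall (f := (T : H →ₗ[ℂ] H)) 1) (half_pos hε)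
  choose g hg hgψ using fun w => hconv x w (ε / 2) (half_pos hε)
  obtain ⟨ψ, hψ, hgψ'⟩ := exists_mem_locClass_forall_mul_eq (ht.image g)
    (Set.image_subset_iff.mpr fun w _ => hg w)
  refine ⟨ψ, hψ, ?_⟩
  calc ‖π (toCC ψ) ∘L T‖ ≤ ‖π (toCC ψ)‖ * (ε / 2) + ε / 2 :=
        (π (toCC ψ)).norm_comp_le_of_subset_iUnion_ball T (half_pos hε).le hcover
          fun w hw => (hgψ w ψ hψ (hgψ' _ ⟨w, hw, rfl⟩)).le
    _ ≤ 1 * (ε / 2) + ε / 2 := by gcongr; exact norm_map_toCC_le_one π hψ.1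
    _ = ε := by ring

theorem mem_Jloc_of_isCompactOperator [T2Space X] (hconv : LocStrongConv π) {T : H →L[ℂ] H}
    (hT : T ∈ localOps π) (hK : IsCompactOperator T) (x : X) : T ∈ Jloc π x := by
  rw [Jloc, ← closure_closure]
  refine Metric.mem_closure_iff.mpr fun ε hε => ?_
  obtain ⟨ψ, hψ, hψT⟩ := exists_mem_locClass_norm_comp_le π hconv hK x (half_pos hε)
  refine ⟨T - π (toCC ψ) ∘L T, ?_, ?_⟩
  · have : T - π (toCC ψ) ∘L T = 1 ∘L π (1 - toCC ψ) ∘L T := by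
      ext v
      simp
    rw [this]
    exact comp_comp_mem_Jloc π (one_mem_localOps π) hT (by simp [toCC, locClass_apply_self hψ])
  · rw [dist_eq_norm, sub_sub_cancel]
    linarith

theorem exists_isOpen_sandwich_approx_of_generator [NormalSpace X] {x : X} {n : ℕ}
    {A B : Fin n → H →L[ℂ] H} {φ : Fin n → C(X, ℂ)} (hA : ∀ i, A i ∈ localOps π)
    (hφ : ∀ i, φ i x = 0) {ε : ℝ} (hε : 0 < ε) :
    ∃ U : Set X, IsOpen U ∧ x ∈ U ∧ ∀ σ : C(X, ℂ), tsupport σ ⊆ U → ∃ S : H →L[ℂ] H,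
      ‖S‖ ≤ ε ∧ π σ * (∑ i, A i ∘L π (φ i) ∘L B i) * π σ - π σ * S * π σ ∈ 𝒦 := by
  set C := ∑ i, ‖A i‖ * ‖B i‖
  have hC : 0 ≤ C := by positivity
  set δ := ε / (C + 1)
  have hδ : 0 < δ := by positivity
  have hCδ : C * δ ≤ ε := by
    rw [mul_div_assoc', div_le_iff₀ (by positivity)]
    nlinarith
  set U := ⋂ i, {y | ‖φ i y‖ < δ}
  have hUo : IsOpen U := isOpen_iInter_of_finite fun i => isOpen_lt (by fun_prop) continuous_const
  refine ⟨U, hUo, Set.mem_iInter.mpr fun i => by simp [hφ i, hδ], fun σ hσU => ?_⟩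
  obtain ⟨θ, hθU, hθσ, hθ⟩ := exists_continuous_zero_one_of_isClosed hUo.isClosed_compl
    (isClosed_tsupport σ) (Set.disjoint_compl_left_iff_subset.mpr hσU)
  -- `θ` cuts the `φ i` off outside `U`, where they are small, without changing them near `σ`.
  have hσθ : ∀ i, σ * φ i = σ * (toCC θ * φ i) := fun i => by
    ext y
    by_cases hy : y ∈ tsupport σ
    · simp [toCC, hθσ hy]
    · simp [image_eq_zero_of_notMem_tsupport hy]
  refine ⟨∑ i, A i ∘L π (toCC θ * φ i) ∘L B i, ?_, ?_⟩
  · calc ‖∑ i, A i ∘L π (toCC θ * φ i) ∘L B i‖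
        ≤ ∑ i, ‖A i‖ * (‖π (toCC θ * φ i)‖ * ‖B i‖) := by
          refine (norm_sum_le _ _).trans (Finset.sum_le_sum fun i _ => ?_)
          exact (ContinuousLinearMap.opNorm_comp_le _ _).trans
            (by gcongr; exact ContinuousLinearMap.opNorm_comp_le _ _)
      _ ≤ ∑ i, ‖A i‖ * (δ * ‖B i‖) := by
          gcongr with i
          refine (NonUnitalStarAlgHom.norm_apply_le π _).trans ?_
          exact norm_toCC_mul_le hθ (fun y hy => hθU hy) hδ.le
            fun y hy => (Set.mem_iInter.mp hy i).le
      _ = C * δ := by rw [Finset.sum_mul]; exact Finset.sum_congr rfl fun i _ => by ring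
      _ ≤ ε := hCδ
  · simp_rw [Finset.mul_sum, Finset.sum_mul, ← Finset.sum_sub_distrib]
    exact Submodule.sum_mem _ fun i _ => sandwich_sub_mem_compactOperator π (hA i) (B i) (hσθ i)

theorem exists_isOpen_sandwich_approx_of_mem_Jloc [NormalSpace X] {x : X} {T : H →L[ℂ] H}
    (hT : T ∈ Jloc π x) {ε : ℝ} (hε : 0 < ε) :
    ∃ U : Set X, IsOpen U ∧ x ∈ U ∧ ∀ σ : C(X, ℂ), tsupport σ ⊆ U → ∃ E : H →L[ℂ] H,
      ‖E‖ ≤ ε ∧ π σ * T * π σ - π σ * E * π σ ∈ 𝒦 := by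
  obtain ⟨_, ⟨n, A, B, φ, hA, -, hφ, rfl⟩, hTS⟩ :=
    Metric.mem_closure_iff.mp hT (ε / 2) (half_pos hε)
  obtain ⟨U, hUo, hxU, hU⟩ := exists_isOpen_sandwich_approx_of_generator π hA hφ (half_pos hε)
  refine ⟨U, hUo, hxU, fun σ hσU => ?_⟩
  obtain ⟨S, hS, hσS⟩ := hU σ hσU
  set G := ∑ i, A i ∘L π (φ i) ∘L B i
  refine ⟨T - G + S, ?_, ?_⟩
  · calc ‖T - G + S‖ ≤ ‖T - G‖ + ‖S‖ := norm_add_le _ _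
      _ ≤ ε / 2 + ε / 2 := by gcongr; exact (dist_eq_norm T G ▸ hTS).le
      _ = ε := add_halves ε
  · convert hσS using 1
    noncomm_ring

theorem isCompactOperator_of_forall_mem_Jloc [T2Space X] {T : H →L[ℂ] H} (hT : T ∈ localOps π)
    (hJ : ∀ x, T ∈ Jloc π x) : IsCompactOperator T := by
  refine isClosed_setOfPred_isCompactOperator.closure_subset
    (Metric.mem_closure_iff.mpr fun ε hε => ?_)
  choose U hUo hxU hU using
    fun x => exists_isOpen_sandwich_approx_of_mem_Jloc π (hJ x) (half_pos hε)
  obtain ⟨t, ht⟩ := isCompact_univ.elim_finite_subcover U hUo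
    fun x _ => Set.mem_iUnion.mpr ⟨x, hxU x⟩
  obtain ⟨σ, hσU, hσ⟩ := exists_sq_partition (U := fun i : t => U i) (fun i => hUo i)
    (by simpa [Set.iUnion_subtype] using ht)
  choose E hE hTE using fun i : t => hU i (toCC (σ i)) ((tsupport_toCC (σ i)).trans_le (hσU i))
  set P := fun i => π (toCC (σ i))
  have hP : ∑ i, P i * P i = 1 := sum_map_toCC_mul_self_eq_one π hσ
  -- `T ≡ ∑ Pᵢ T Pᵢ` modulo compacts: `∑ Pᵢ² = 1` and each `Pᵢ` commutes with `T` modulo compacts.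
  have hK : T - ∑ i, P i * E i * P i ∈ 𝒦 := by
    have : T - ∑ i, P i * E i * P i =
        ∑ i, ((P i * T * P i - P i * E i * P i) + P i * (P i * T - T * P i)) :=
      calc T - ∑ i, P i * E i * P i = (∑ i, P i * P i) * T - ∑ i, P i * E i * P i := by
            rw [hP, one_mul]
        _ = _ := by
            rw [Finset.sum_mul, ← Finset.sum_sub_distrib]
            exact Finset.sum_congr rfl fun i _ => by noncomm_ring
    rw [this]
    exact Submodule.sum_mem _ fun i _ => add_mem (hTE i)
      ((commutator_mem_compactOperator π hT _).clm_comp (P i))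
  refine ⟨_, hK, ?_⟩
  rw [dist_eq_norm, sub_sub_cancel]
  exact (norm_sum_mul_mul_le (fun i => ((isSelfAdjoint_toCC (σ i)).map π).isSymmetric) hP
    (half_pos hε).le hE).trans_lt (half_lt_self hε)

end Compact

end Localization

theorem compact_iff_all_local_representatives_zero_general
    {X : Type*} [TopologicalSpace X] [CompactSpace X] [T2Space X]
    {H : Type*} [NormedAddCommGroup H] [InnerProductSpace ℂ H] [CompleteSpace H]
    (π : C(X, ℂ) →⋆ₐ[ℂ] (H →L[ℂ] H)) (hconv : LocStrongConv π)
    (T : H →L[ℂ] H) (hT : T ∈ localOps π) :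
    IsCompactOperator ⇑T ↔ ∀ x : X, T ∈ Jloc π x :=
  ⟨mem_Jloc_of_isCompactOperator π hconv hT, isCompactOperator_of_forall_mem_Jloc π hT⟩

/-- Under the localization hypotheses, a local operator is compact if and
only if all of its local representatives `p_x(A) ∈ 𝒜/J_x` vanish, i.e. `A ∈ J_x` for all `x`. -/
theorem compact_iff_all_local_representatives_zero
    {X : Type*} [TopologicalSpace X] [CompactSpace X] [T2Space X]
    {H : Type*} [NormedAddCommGroup H] [InnerProductSpace ℂ H] [CompleteSpace H]
    (π : C(X, ℂ) →⋆ₐ[ℂ] (H →L[ℂ] H)) (hπ : FaithfulNoCompact π) (hconv : LocStrongConv π)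
    (T : H →L[ℂ] H) (hT : T ∈ localOps π) :
    IsCompactOperator ⇑T ↔ ∀ x : X, T ∈ Jloc π x :=
  compact_iff_all_local_representatives_zero_general π hconv T hT
end

section
/- With C(X) acting on H as above, the ideal J_x generated in the algebra A of local operators by functions vanishing at x consists exactly of those A ∈ A such that the limit over the localizing class F_x of the norms ‖Aφ‖ equals zero, i.e., for every ε > 0 there exists φ ∈ F_x such that ‖Aψ‖ ≤ ε for all ψ ∈ F_x with φψ = ψ. -/
set_option linter.unusedSectionVars false

open Filter Topology

section AuxProof

variable {X : Type*} [TopologicalSpace X] [CompactSpace X] [T2Space X]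
variable {H : Type*} [NormedAddCommGroup H] [InnerProductSpace ℂ H] [CompleteSpace H]

lemma star_toCC {X : Type*} [TopologicalSpace X] (ψ : C(X,ℝ)) : star (toCC ψ) = toCC ψ := by
  ext y
  simp [toCC, Complex.conj_ofReal]

lemma norm_toCC_le_one {ψ : C(X,ℝ)} (hψ : ∀ y, ψ y ∈ Set.Icc (0:ℝ) 1) : ‖toCC ψ‖ ≤ 1 := by
  rw [ContinuousMap.norm_le _ zero_le_one]
  intro y
  have := hψ y
  simp only [toCC, ContinuousMap.coe_mk, Complex.norm_real]
  rw [Real.norm_eq_abs, abs_le]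
  constructor <;> linarith [this.1, this.2]

/-- A localizing function supported in a given neighborhood. -/
lemma exists_loc_subset (x : X) {U : Set X} (hU : U ∈ 𝓝 x) :
    ∃ φ ∈ locClass x, ∀ y, φ y ≠ 0 → y ∈ U := by
  obtain ⟨C, ⟨hCn, hCc⟩, hCsub⟩ := (closed_nhds_basis x).mem_iff.mp (interior_mem_nhds.mpr hU)
  obtain ⟨f, hf0, hf1, hficc⟩ :=
    exists_continuous_zero_one_of_isClosed isOpen_interior.isClosed_compl hCc
      (disjoint_compl_left.mono_right hCsub)
  refine ⟨f, ⟨hficc, C, hCn, fun y hy => by simpa using hf1 hy⟩, fun y hy => ?_⟩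
  by_contra h
  exact hy (by simpa using hf0 (fun hin : y ∈ interior U => h (interior_subset hin)))

/-- Refinement of finitely many localizing functions plus a neighborhood. -/
lemma loc_refine (x : X) {ι : Type*} [Finite ι] (g : ι → C(X,ℝ))
    (hg : ∀ i, g i ∈ locClass x) {W : Set X} (hW : W ∈ 𝓝 x) :
    ∃ φ ∈ locClass x, (∀ ψ : C(X,ℝ), φ * ψ = ψ → ∀ i, g i * ψ = ψ) ∧
      (∀ ψ : C(X,ℝ), φ * ψ = ψ → ∀ y, ψ y ≠ 0 → y ∈ W) := by
  have hone : ∀ i, {y | g i y = 1} ∈ 𝓝 x := by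
    intro i
    obtain ⟨-, U, hU, hU1⟩ := hg i
    exact mem_of_superset hU hU1
  have hUmem : (W ∩ ⋂ i, {y | g i y = 1}) ∈ 𝓝 x :=
    Filter.inter_mem hW (Filter.iInter_mem.mpr hone)
  obtain ⟨φ, hφ, hsub⟩ := exists_loc_subset x hUmem
  have key : ∀ ψ : C(X,ℝ), φ * ψ = ψ → ∀ y, ψ y ≠ 0 →
      y ∈ W ∩ ⋂ i, {y | g i y = 1} := by
    intro ψ hψ y hy
    have h1 : φ y * ψ y = ψ y := by
      have := congrArg (fun f : C(X,ℝ) => f y) hψ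
      simpa using this
    have : φ y ≠ 0 := fun h0 => hy (by rw [← h1, h0, zero_mul])
    exact hsub y this
  refine ⟨φ, hφ, fun ψ hψ i => ?_, fun ψ hψ y hy => (key ψ hψ y hy).1⟩
  ext y
  by_cases hy : ψ y = 0
  · simp [hy]
  · have := (key ψ hψ y hy).2
    rw [Set.mem_iInter] at this
    simp only [ContinuousMap.mul_apply]
    rw [this i, one_mul]

variable (π : C(X, ℂ) →⋆ₐ[ℂ] (H →L[ℂ] H))

lemma norm_pi_loc_le_one {x : X} {ψ : C(X,ℝ)} (hψ : ψ ∈ locClass x) :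
    ‖π (toCC ψ)‖ ≤ 1 :=
  (NonUnitalStarAlgHom.norm_apply_le π _).trans (norm_toCC_le_one hψ.1)

/-- For a fixed compact operator `M`, `‖π(ψ) ∘ M‖` is eventually small along the
localizing class. -/
lemma loc_comp_compact_right (hconv : LocStrongConv π) (x : X) {M : H →L[ℂ] H}
    (hM : IsCompactOperator ⇑M) {ε : ℝ} (hε : 0 < ε) :
    ∃ φ ∈ locClass x, ∀ ψ ∈ locClass x, φ * ψ = ψ → ‖π (toCC ψ) ∘L M‖ ≤ ε := by
  have hK : IsCompact (closure (⇑M '' Metric.closedBall 0 1)) :=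
    hM.isCompact_closure_image_closedBall 1
  obtain ⟨t, htfin, htcover⟩ :=
    (Metric.totallyBounded_iff.mp hK.totallyBounded) (ε/3) (by positivity)
  haveI := htfin.to_subtype
  choose g hg hgprop using fun c : t => hconv x (c : H) (ε/3) (by positivity)
  obtain ⟨φ, hφ, hrefine, -⟩ := loc_refine x g hg (Filter.univ_mem (f := 𝓝 x))
  refine ⟨φ, hφ, fun ψ hψloc hψ => ?_⟩
  have hπψ : ‖π (toCC ψ)‖ ≤ 1 := norm_pi_loc_le_one π hψloc
  have hball : ∀ u : H, ‖u‖ ≤ 1 → ‖π (toCC ψ) (M u)‖ ≤ 2*ε/3 := by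
    intro u hu
    have : M u ∈ ⋃ y ∈ t, Metric.ball y (ε/3) :=
      htcover (subset_closure ⟨u, Metric.mem_closedBall.mpr (by simpa using hu), rfl⟩)
    simp only [Set.mem_iUnion, Metric.mem_ball] at this
    obtain ⟨c, hc, hdist⟩ := this
    have h1 : ‖π (toCC ψ) (M u - c)‖ ≤ ε/3 := by
      calc ‖π (toCC ψ) (M u - c)‖ ≤ ‖π (toCC ψ)‖ * ‖M u - c‖ :=
            (π (toCC ψ)).le_opNorm _
        _ ≤ 1 * (ε/3) := by
            apply mul_le_mul hπψ _ (norm_nonneg _) zero_le_one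
            rw [← dist_eq_norm]; exact hdist.le
        _ = ε/3 := one_mul _
    have h2 : ‖π (toCC ψ) c‖ < ε/3 := hgprop ⟨c, hc⟩ ψ hψloc (hrefine ψ hψ ⟨c, hc⟩)
    calc ‖π (toCC ψ) (M u)‖ = ‖π (toCC ψ) (M u - c) + π (toCC ψ) c‖ := by
          rw [← map_add, sub_add_cancel]
      _ ≤ ‖π (toCC ψ) (M u - c)‖ + ‖π (toCC ψ) c‖ := norm_add_le _ _
      _ ≤ ε/3 + ε/3 := add_le_add h1 h2.le
      _ = 2*ε/3 := by ring
  apply ContinuousLinearMap.opNorm_le_bound _ hε.le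
  intro v
  rcases eq_or_ne v 0 with rfl | hv
  · simp
  · set a : ℂ := (‖v‖ : ℂ) with ha
    have ha0 : a ≠ 0 := by
      simp [ha, norm_eq_zero, hv]
    set u := a⁻¹ • v with hu
    have hunorm : ‖u‖ ≤ 1 := by
      rw [hu, norm_smul, norm_inv]
      simp [ha, Complex.norm_real, abs_of_nonneg (norm_nonneg v),
        inv_mul_cancel₀ (norm_ne_zero_iff.mpr hv)]
    have hva : v = a • u := by rw [hu, smul_inv_smul₀ ha0]
    calc ‖(π (toCC ψ) ∘L M) v‖ = ‖a‖ * ‖π (toCC ψ) (M u)‖ := by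
          rw [ContinuousLinearMap.comp_apply, hva, map_smul, map_smul, norm_smul]
      _ ≤ ‖a‖ * (2*ε/3) := mul_le_mul_of_nonneg_left (hball u hunorm) (norm_nonneg a)
      _ ≤ ‖v‖ * ε := by
          have : ‖a‖ = ‖v‖ := by simp [ha, abs_of_nonneg (norm_nonneg v)]
          rw [this]
          apply mul_le_mul_of_nonneg_left _ (norm_nonneg v)
          linarith
      _ = ε * ‖v‖ := mul_comm _ _

/-- For a fixed compact operator `C`, `‖C ∘ π(ψ)‖` is eventually small along the
localizing class. -/
lemma loc_comp_compact_left (hconv : LocStrongConv π) (x : X) {C : H →L[ℂ] H}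
    (hC : IsCompactOperator ⇑C) {ε : ℝ} (hε : 0 < ε) :
    ∃ φ ∈ locClass x, ∀ ψ ∈ locClass x, φ * ψ = ψ → ‖C ∘L π (toCC ψ)‖ ≤ ε := by
  have hM : IsCompactOperator ⇑(star C * C) := hC.clm_comp (star C)
  obtain ⟨φ, hφ, hbound⟩ := loc_comp_compact_right π hconv x hM (mul_pos hε hε)
  refine ⟨φ, hφ, fun ψ hψloc hψ => ?_⟩
  set u := π (toCC ψ) with hu
  have hustar : star u = u := by rw [hu, ← map_star, star_toCC]
  have hun : ‖u‖ ≤ 1 := norm_pi_loc_le_one π hψloc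
  have key : ‖C * u‖ * ‖C * u‖ ≤ ε * ε := by
    calc ‖C * u‖ * ‖C * u‖ = ‖star (C * u) * (C * u)‖ := CStarRing.norm_star_mul_self.symm
      _ = ‖(u * (star C * C)) * u‖ := by rw [star_mul, hustar]; congr 1
      _ ≤ ‖u * (star C * C)‖ * ‖u‖ := norm_mul_le _ _
      _ ≤ (ε * ε) * 1 := by
          apply mul_le_mul _ hun (norm_nonneg _) (by positivity)
          exact hbound ψ hψloc hψ
      _ = ε * ε := mul_one _
  have hEq : ‖C ∘L π (toCC ψ)‖ = ‖C * u‖ := rfl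
  rw [hEq]
  nlinarith [norm_nonneg (C * u)]

end AuxProof

/-- Under the localization hypotheses, the ideal `J_x` consists exactly of
the local operators `A` with `lim_{φ ∈ F_x} ‖Aφ‖ = 0` along the directed localizing class. -/
theorem mem_Jloc_iff_norm_tendsto_zero
    {X : Type*} [TopologicalSpace X] [CompactSpace X] [T2Space X]
    {H : Type*} [NormedAddCommGroup H] [InnerProductSpace ℂ H] [CompleteSpace H]
    (π : C(X, ℂ) →⋆ₐ[ℂ] (H →L[ℂ] H)) (hπ : FaithfulNoCompact π) (hconv : LocStrongConv π)
    (x : X) (T : H →L[ℂ] H) (hT : T ∈ localOps π) :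
    T ∈ Jloc π x ↔
      ∀ ε : ℝ, 0 < ε → ∃ φ ∈ locClass x, ∀ ψ ∈ locClass x, φ * ψ = ψ →
        ‖T ∘L π (toCC ψ)‖ ≤ ε := by
  constructor
  · intro hmem ε hε
    unfold Jloc at hmem
    rw [Metric.mem_closure_iff] at hmem
    obtain ⟨S, hSmem, hdist⟩ := hmem (ε/2) (by positivity)
    rw [dist_eq_norm] at hdist
    obtain ⟨n, A, B, f, hA, hB, hfx, hSeq⟩ := hSmem
    set R : ℝ := ∑ i, ‖A i‖ * ‖B i‖ with hR
    have hR0 : 0 ≤ R := Finset.sum_nonneg fun i _ => mul_nonneg (norm_nonneg _) (norm_nonneg _)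
    set δ : ℝ := ε / (4*(R+1)) with hδdef
    have hδ : 0 < δ := by positivity
    have hCcpt : ∀ i, IsCompactOperator ⇑(A i ∘L (B i ∘L π (f i) - π (f i) ∘L B i)) := by
      intro i
      have h := (hB i (f i)).clm_comp (A i)
      simpa [ContinuousLinearMap.coe_comp'] using h
    choose φ' hφ'loc hφ'bound using fun i =>
      loc_comp_compact_left π hconv x (hCcpt i)
        (show (0:ℝ) < ε/(4*((n:ℝ)+1)) by positivity)
    have hW : (⋂ i, {y | ‖f i y‖ < δ}) ∈ 𝓝 x := by
      refine Filter.iInter_mem.mpr fun i => ?_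
      have hopen : IsOpen {y | ‖f i y‖ < δ} :=
        isOpen_lt ((map_continuous (f i)).norm) continuous_const
      exact hopen.mem_nhds (by simp [hfx i, hδ])
    obtain ⟨φ, hφloc, href1, href2⟩ := loc_refine x φ' hφ'loc hW
    refine ⟨φ, hφloc, fun ψ hψloc hψ => ?_⟩
    set u := π (toCC ψ) with hu
    have hun : ‖u‖ ≤ 1 := norm_pi_loc_le_one π hψloc
    have hψ1 : ∀ y, ‖(toCC ψ) y‖ ≤ 1 := by
      intro y
      have := hψloc.1 y
      simp only [toCC, ContinuousMap.coe_mk, Complex.norm_real, Real.norm_eq_abs]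
      rw [abs_le]
      constructor <;> linarith [this.1, this.2]
    have hsmall : ∀ i, ‖f i * toCC ψ‖ ≤ δ := by
      intro i
      rw [ContinuousMap.norm_le _ hδ.le]
      intro y
      rcases eq_or_ne (ψ y) 0 with h0 | h0
      · have : (toCC ψ) y = 0 := by simp [toCC, h0]
        rw [ContinuousMap.mul_apply, this, mul_zero, norm_zero]
        exact hδ.le
      · have hyW := href2 ψ hψ y h0
        rw [Set.mem_iInter] at hyW
        have h1 : ‖f i y‖ < δ := hyW i
        calc ‖(f i * toCC ψ) y‖ = ‖f i y‖ * ‖(toCC ψ) y‖ := by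
              rw [ContinuousMap.mul_apply, norm_mul]
          _ ≤ δ * 1 := mul_le_mul h1.le (hψ1 y) (norm_nonneg _) hδ.le
          _ = δ := mul_one _
    have hterm : ∀ i, ‖(A i ∘L π (f i) ∘L B i) * u‖ ≤ ‖A i‖*‖B i‖*δ + ε/(4*((n:ℝ)+1)) := by
      intro i
      have hπmul : π (f i * toCC ψ) = π (f i) * u := by rw [map_mul, hu]
      have hdecomp : (A i ∘L π (f i) ∘L B i) * u
          = A i * B i * π (f i * toCC ψ)
            - (A i ∘L (B i ∘L π (f i) - π (f i) ∘L B i)) * u := by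
        rw [hπmul]
        simp only [← ContinuousLinearMap.mul_def]
        noncomm_ring
      rw [hdecomp]
      have hb1 : ‖A i * B i * π (f i * toCC ψ)‖ ≤ ‖A i‖*‖B i‖*δ := by
        calc ‖A i * B i * π (f i * toCC ψ)‖ ≤ ‖A i * B i‖ * ‖π (f i * toCC ψ)‖ :=
              norm_mul_le _ _
          _ ≤ (‖A i‖ * ‖B i‖) * δ := by
              apply mul_le_mul (norm_mul_le _ _)
                ((NonUnitalStarAlgHom.norm_apply_le π _).trans (hsmall i))
                (norm_nonneg _) (mul_nonneg (norm_nonneg _) (norm_nonneg _))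
      have hb2 : ‖(A i ∘L (B i ∘L π (f i) - π (f i) ∘L B i)) * u‖ ≤ ε/(4*((n:ℝ)+1)) :=
        hφ'bound i ψ hψloc (href1 ψ hψ i)
      calc ‖A i * B i * π (f i * toCC ψ)
            - (A i ∘L (B i ∘L π (f i) - π (f i) ∘L B i)) * u‖
          ≤ ‖A i * B i * π (f i * toCC ψ)‖
            + ‖(A i ∘L (B i ∘L π (f i) - π (f i) ∘L B i)) * u‖ := norm_sub_le _ _
        _ ≤ ‖A i‖*‖B i‖*δ + ε/(4*((n:ℝ)+1)) := add_le_add hb1 hb2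
    have hRδ : R * δ ≤ ε/4 := by
      have h1 : R * δ ≤ (R+1) * δ := by
        apply mul_le_mul_of_nonneg_right (by linarith) hδ.le
      have h2 : (R+1) * δ = ε/4 := by
        rw [hδdef]
        field_simp
      linarith
    have hnε : (n:ℝ) * (ε/(4*((n:ℝ)+1))) ≤ ε/4 := by
      have hn0 : (0:ℝ) ≤ n := Nat.cast_nonneg n
      have h1 : (n:ℝ) * (ε/(4*((n:ℝ)+1))) ≤ ((n:ℝ)+1) * (ε/(4*((n:ℝ)+1))) := by
        apply mul_le_mul_of_nonneg_right (by linarith) (by positivity)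
      have h2 : ((n:ℝ)+1) * (ε/(4*((n:ℝ)+1))) = ε/4 := by
        field_simp
      linarith
    have hSu : ‖S * u‖ ≤ ε/2 := by
      rw [hSeq, Finset.sum_mul]
      calc ‖∑ i, (A i ∘L π (f i) ∘L B i) * u‖
          ≤ ∑ i, ‖(A i ∘L π (f i) ∘L B i) * u‖ := norm_sum_le _ _
        _ ≤ ∑ i, (‖A i‖*‖B i‖*δ + ε/(4*((n:ℝ)+1))) := Finset.sum_le_sum fun i _ => hterm i
        _ = R*δ + (n:ℝ)*(ε/(4*((n:ℝ)+1))) := by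
            rw [Finset.sum_add_distrib, ← Finset.sum_mul, Finset.sum_const,
              Finset.card_univ, Fintype.card_fin, nsmul_eq_mul]
        _ ≤ ε/4 + ε/4 := add_le_add hRδ hnε
        _ = ε/2 := by ring
    have hTu : T ∘L π (toCC ψ) = (T - S) * u + S * u := by
      rw [← hu]
      simp only [← ContinuousLinearMap.mul_def]
      noncomm_ring
    rw [hTu]
    calc ‖(T - S) * u + S * u‖ ≤ ‖(T - S) * u‖ + ‖S * u‖ := norm_add_le _ _
      _ ≤ ‖T - S‖ * ‖u‖ + ε/2 := add_le_add (norm_mul_le _ _) hSu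
      _ ≤ (ε/2) * 1 + ε/2 := by
          apply add_le_add _ le_rfl
          exact mul_le_mul hdist.le hun (norm_nonneg _) (by positivity)
      _ = ε := by ring
  · intro h
    unfold Jloc
    rw [Metric.mem_closure_iff]
    intro ε hε
    obtain ⟨φ, hφloc, hbound⟩ := h (ε/2) (by positivity)
    have hUone : {y | φ y = 1} ∈ 𝓝 x := by
      obtain ⟨-, U, hU, h1⟩ := hφloc
      exact mem_of_superset hU h1
    obtain ⟨ψ, hψloc, hsub⟩ := exists_loc_subset x hUone
    have hφψ : φ * ψ = ψ := by
      ext y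
      by_cases h0 : ψ y = 0
      · simp [h0]
      · have : φ y = 1 := hsub y h0
        simp [this]
    have hbnd := hbound ψ hψloc hφψ
    have hψx : ψ x = 1 := by
      obtain ⟨-, U, hU, h1⟩ := hψloc
      exact h1 x (mem_of_mem_nhds hU)
    have hid : (ContinuousLinearMap.id ℂ H) ∈ localOps π := by
      intro g
      simpa using isCompactOperator_zero
    refine ⟨∑ _i : Fin 1, T ∘L π (1 - toCC ψ) ∘L ContinuousLinearMap.id ℂ H,
      ⟨1, fun _ => T, fun _ => ContinuousLinearMap.id ℂ H, fun _ => 1 - toCC ψ,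
        fun _ => hT, fun _ => hid, fun _ => ?_, rfl⟩, ?_⟩
    · simp [toCC, hψx]
    · rw [dist_eq_norm]
      have hb : (∑ _i : Fin 1, T ∘L π (1 - toCC ψ) ∘L ContinuousLinearMap.id ℂ H)
          = T - T ∘L π (toCC ψ) := by
        rw [Fin.sum_univ_one, ContinuousLinearMap.comp_id, map_sub, map_one]
        simp only [← ContinuousLinearMap.mul_def]
        noncomm_ring
      rw [hb, sub_sub_cancel]
      calc ‖T ∘L π (toCC ψ)‖ ≤ ε/2 := hbnd
        _ < ε := by linarith
end
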